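/- For every m ∈ ℕ and every n ∈ ℕ, the list lgen_m n is sorted in (weakly) descending order and all its elements are ≤ m. -/

import Mathlib

def next (m : ℕ) : List ℕ → List ℕ
  | [] => [0]
  | h :: t =>
    if h < m then (h + 1) :: t
    else
      match next m t with
      | [] => []
      | x :: t' => x :: x :: t'

def lgen (m : ℕ) : ℕ → List ℕ
  | 0 => []
  | n + 1 => next m (lgen m n)

theorem pairwise_ge_next (m : ℕ) {l : List ℕ} (hl : l.Pairwise (· ≥ ·)) :
    (next m l).Pairwise (· ≥ ·) := by
  induction l with
  | nil => simp [next]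
  | cons h t ih =>
    obtain ⟨hh, ht⟩ := List.pairwise_cons.mp hl
    by_cases hm : h < m
    · simpa [next, hm] using ⟨fun b hb => (hh b hb).trans h.le_succ, ht⟩
    · have ih := ih ht
      simp only [next, if_neg hm]
      split
      · exact List.Pairwise.nil
      · next x t' hnt =>
        rw [hnt] at ih
        exact ih.cons (List.forall_mem_cons.mpr ⟨le_rfl, (List.pairwise_cons.mp ih).1⟩)

theorem le_of_mem_next {m : ℕ} {l : List ℕ} (hl : ∀ x ∈ l, x ≤ m) :
    ∀ x ∈ next m l, x ≤ m := by
  induction l with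
  | nil => simp [next]
  | cons h t ih =>
    have ht : ∀ x ∈ t, x ≤ m := fun x hx => hl x (List.mem_cons_of_mem h hx)
    by_cases hm : h < m
    · simpa [next, hm, Nat.succ_le_of_lt hm] using ht
    · have ih := ih ht
      simp only [next, if_neg hm]
      split
      · simp
      · next x t' hnt =>
        rw [hnt] at ih
        simpa using ih

theorem stmt_15 (m n : ℕ) :
    (lgen m n).Pairwise (· ≥ ·) ∧ ∀ x ∈ lgen m n, x ≤ m := by
  induction n with
  | zero => simp [lgen]
  | succ n ih => exact ⟨pairwise_ge_next m ih.1, le_of_mem_next ih.2⟩
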